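/- Let F_1,…,F_N : ℝ³ → ℝ be smooth, strictly positive Schwartz functions such that each ∇ log F_i has at most polynomial growth. Then the entropy production D(F) := (1/2) ∑_{i,j=1}^N ∬_{ℝ³×ℝ³} F_i(p) F_j(p') (∇log F_i(p) − ∇log F_j(p')) · A^{(ij)}[p/m_i − p'/m_j] (∇log F_i(p) − ∇log F_j(p')) dp dp' vanishes, D(F) = 0, if and only if there exist constants ρ̃_1,…,ρ̃_N > 0, u ∈ ℝ³ and θ > 0 such that F_i(p) = ρ̃_i (2π m_i θ)^{-3/2} exp(−|p − m_i u|²/(2 m_i θ)) for all i = 1,…,N, i.e. the F_i are Maxwellians with the same velocity u and the same temperature θ. -/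

import Mathlib

/-!
Write `z = p / m_i - p' / m_j` and `d = ∇log F_i(p) - ∇log F_j(p')`. Since `A^{(ij)}[z]` is
`C^{(ij)} |z|^{γ+2}` times the orthogonal projection onto `z^⊥`, the `(i, j)` summand of `D(F)`
integrates the nonnegative function `F_i(p) F_j(p') C^{(ij)} |z|^{γ+2} |Π_{z^⊥} d|²`, which is
integrable (Schwartz decay against polynomial growth) and continuous off `z = 0`. So `D(F) = 0`
forces `d ∥ z` for all `p, p'`. In dimension at least two this makes `∇log F_i(m_i q) = λ q + u`
with `λ, u` independent of `i`, so every `log F_i` is a quadratic polynomial; decay of `F_i`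
gives `λ < 0`, and `θ = -1/λ` is the common temperature. Conversely, for such Maxwellians
`d = -z / θ`, which `A[z]` annihilates.
-/

noncomputable section

open Real MeasureTheory Finset
open scoped InnerProductSpace

abbrev E3 : Type := EuclideanSpace ℝ (Fin 3)

/-- Divergence of a vector field on `E3`. -/
def diverg (V : E3 → E3) (p : E3) : ℝ :=
  ∑ k : Fin 3, fderiv ℝ V p (EuclideanSpace.single k 1) k

/-- The Landau matrix `A^{(ij)}[z]`, applied to a vector `v`:
`A[z] v = c |z|^{γ+2} (v - (z·v/|z|²) z)`. -/
def Aapp (c γ : ℝ) (z v : E3) : E3 :=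
  (c * ‖z‖ ^ (γ + 2)) • (v - (⟪z, v⟫_ℝ / ‖z‖ ^ (2 : ℕ)) • z)

/-- Maxwellian with density `ρ`, particle mass `mass` and temperature `kT`. -/
def Maxw (ρ mass kT : ℝ) (p : E3) : ℝ :=
  ρ * (2 * π * mass * kT) ^ (-(3 : ℝ) / 2) * Real.exp (-‖p‖ ^ (2 : ℕ) / (2 * mass * kT))

variable {N : ℕ}

/-- The linearized Landau collision operator `L_{ij}`. -/
def Lij (mass ρ : Fin N → ℝ) (C : Fin N → Fin N → ℝ) (γ kT : ℝ)
    (f : Fin N → E3 → ℝ) (i j : Fin N) (p : E3) : ℝ :=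
  (Maxw (ρ i) (mass i) kT p) ^ (-(1 : ℝ) / 2) *
    diverg (fun q => ∫ p',
      (Maxw (ρ i) (mass i) kT q * Maxw (ρ j) (mass j) kT p') •
        Aapp (C i j) γ ((mass i)⁻¹ • q - (mass j)⁻¹ • p')
          (gradient (fun r => f i r / Real.sqrt (Maxw (ρ i) (mass i) kT r)) q -
           gradient (fun r => f j r / Real.sqrt (Maxw (ρ j) (mass j) kT r)) p')) p

/-- The full linearized operator `L = (L_1, …, L_N)`, `L_i = ∑_j L_{ij}`. -/
def Lvec (mass ρ : Fin N → ℝ) (C : Fin N → Fin N → ℝ) (γ kT : ℝ)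
    (f : Fin N → E3 → ℝ) (i : Fin N) (p : E3) : ℝ :=
  ∑ j, Lij mass ρ C γ kT f i j p

/-- The mono-species part `L^m`. -/
def Lmvec (mass ρ : Fin N → ℝ) (C : Fin N → Fin N → ℝ) (γ kT : ℝ)
    (f : Fin N → E3 → ℝ) (i : Fin N) (p : E3) : ℝ :=
  Lij mass ρ C γ kT f i i p

/-- The bi-species part `L^b = L - L^m`. -/
def Lbvec (mass ρ : Fin N → ℝ) (C : Fin N → Fin N → ℝ) (γ kT : ℝ)
    (f : Fin N → E3 → ℝ) (i : Fin N) (p : E3) : ℝ :=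
  ∑ j ∈ Finset.univ.erase i, Lij mass ρ C γ kT f i j p

/-- `L²` inner product of two `N`-tuples of functions. -/
def ipL2 (f g : Fin N → E3 → ℝ) : ℝ := ∑ i, ∫ p, f i p * g i p

/-- Projection of `v` on the direction of `p`: `P(p) v = (p⊗p/|p|²) v`. -/
def projP (p v : E3) : E3 := (⟪p, v⟫_ℝ / ‖p‖ ^ (2 : ℕ)) • p

/-- The squared `ℋ`-norm. -/
def Hnorm2 (γ : ℝ) (f : Fin N → E3 → ℝ) : ℝ :=
  ∑ i, ∫ p,
    ((1 + ‖p‖ ^ (2 : ℕ)) ^ (γ / 2) * ‖projP p (gradient (f i) p)‖ ^ (2 : ℕ) +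
     (1 + ‖p‖ ^ (2 : ℕ)) ^ ((γ + 2) / 2) *
       ‖gradient (f i) p - projP p (gradient (f i) p)‖ ^ (2 : ℕ) +
     (1 + ‖p‖ ^ (2 : ℕ)) ^ ((γ + 2) / 2) * (f i p) ^ (2 : ℕ))

/-- Membership in the kernel `N(L^m)`. -/
def memNLm (mass ρ : Fin N → ℝ) (kT : ℝ) (g : Fin N → E3 → ℝ) : Prop :=
  ∃ (a c : Fin N → ℝ) (u : Fin N → E3), ∀ i p,
    g i p = Real.sqrt (Maxw (ρ i) (mass i) kT p) * (a i + ⟪u i, p⟫_ℝ + c i * ‖p‖ ^ (2 : ℕ))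

/-- Membership in the kernel `N(L)`. -/
def memNL (mass ρ : Fin N → ℝ) (kT : ℝ) (g : Fin N → E3 → ℝ) : Prop :=
  ∃ (b : Fin N → ℝ) (u : E3) (c : ℝ), ∀ i p,
    g i p = Real.sqrt (Maxw (ρ i) (mass i) kT p) *
      (b i + ⟪u, p⟫_ℝ + c * ‖p‖ ^ (2 : ℕ) / (2 * mass i))

/-- `g` is the `L²`-orthogonal projection of `f` onto the subspace described by `S`. -/
def IsL2ProjOn (S : (Fin N → E3 → ℝ) → Prop) (f g : Fin N → E3 → ℝ) : Prop :=
  S g ∧ ∀ h, S h → ∑ i, ∫ p, (f i p - g i p) * h i p = 0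

/-- The nonlinear Landau collision operator `Q_{ij}`. -/
def Qij (mass : Fin N → ℝ) (C : Fin N → Fin N → ℝ) (γ : ℝ)
    (fi fj : E3 → ℝ) (i j : Fin N) (p : E3) : ℝ :=
  diverg (fun q => ∫ p',
    Aapp (C i j) γ ((mass i)⁻¹ • q - (mass j)⁻¹ • p')
      (fj p' • gradient fi q - fi q • gradient fj p')) p


/-- The entropy production functional `D(F)`. -/
def entProd (mass : Fin N → ℝ) (C : Fin N → Fin N → ℝ) (γ : ℝ)
    (F : Fin N → E3 → ℝ) : ℝ :=
  (1 / 2) * ∑ i, ∑ j, ∫ p, ∫ p',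
    F i p * F j p' *
      ⟪gradient (fun q => Real.log (F i q)) p - gradient (fun q => Real.log (F j q)) p',
        Aapp (C i j) γ ((mass i)⁻¹ • p - (mass j)⁻¹ • p')
          (gradient (fun q => Real.log (F i q)) p -
            gradient (fun q => Real.log (F j q)) p')⟫_ℝ

open Filter Topology

section LandauMatrix

variable (c γ : ℝ) (z v : E3)

theorem Aapp_eq_smul_starProjection :
    Aapp c γ z v = (c * ‖z‖ ^ (γ + 2)) • (ℝ ∙ z)ᗮ.starProjection v := by
  rw [Aapp, Submodule.starProjection_orthogonal_val, Submodule.starProjection_singleton]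
  simp

theorem inner_Aapp_self :
    ⟪v, Aapp c γ z v⟫_ℝ = c * ‖z‖ ^ (γ + 2) * ‖(ℝ ∙ z)ᗮ.starProjection v‖ ^ 2 := by
  rw [Aapp_eq_smul_starProjection, real_inner_smul_right, ← real_inner_self_eq_norm_sq,
    Submodule.inner_starProjection_left_eq_right,
    Submodule.starProjection_eq_self_iff.mpr (Submodule.starProjection_apply_mem _ v)]

variable {c γ}

theorem inner_Aapp_self_nonneg (hc : 0 ≤ c) : 0 ≤ ⟪v, Aapp c γ z v⟫_ℝ := by
  rw [inner_Aapp_self]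
  positivity

theorem inner_Aapp_self_le (hc : 0 ≤ c) (hγ : γ ∈ Set.Icc (-2 : ℝ) 1) :
    ⟪v, Aapp c γ z v⟫_ℝ ≤ c * (1 + ‖z‖) ^ 3 * ‖v‖ ^ 2 := by
  have hγ₀ : 0 ≤ γ + 2 := by linarith [hγ.1]
  have hz : ‖z‖ ^ (γ + 2) ≤ (1 + ‖z‖) ^ 3 := calc
    ‖z‖ ^ (γ + 2) ≤ (1 + ‖z‖) ^ (γ + 2) := by gcongr; linarith
    _ ≤ (1 + ‖z‖) ^ (3 : ℝ) :=
      Real.rpow_le_rpow_of_exponent_le (le_add_of_nonneg_right (norm_nonneg z))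
        (by linarith [hγ.2])
    _ = (1 + ‖z‖) ^ 3 := by norm_cast
  rw [inner_Aapp_self, mul_assoc, mul_assoc]
  gcongr
  exact Submodule.norm_starProjection_apply_le _ v

theorem inner_Aapp_smul_self_eq_zero (s : ℝ) : ⟪s • z, Aapp c γ z (s • z)⟫_ℝ = 0 := by
  rw [inner_Aapp_self, map_smul, Submodule.starProjection_orthogonalComplement_singleton_eq_zero]
  simp

theorem exists_eq_smul_of_inner_Aapp_self_eq_zero (hc : 0 < c) (hz : z ≠ 0)
    (h : ⟪v, Aapp c γ z v⟫_ℝ = 0) : ∃ s : ℝ, v = s • z := by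
  have hpos : 0 < c * ‖z‖ ^ (γ + 2) := by positivity
  rw [inner_Aapp_self, mul_eq_zero, or_iff_right hpos.ne', sq_eq_zero_iff, norm_eq_zero,
    Submodule.starProjection_apply_eq_zero_iff, Submodule.orthogonal_orthogonal,
    Submodule.mem_span_singleton] at h
  exact h.imp fun s hs => hs.symm

theorem continuousOn_Aapp :
    ContinuousOn (fun x : E3 × E3 => Aapp c γ x.1 x.2) {x | x.1 ≠ 0} := by
  intro x hx
  apply ContinuousAt.continuousWithinAt
  unfold Aapp
  fun_prop (disch := simp_all)

end LandauMatrix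

section ParallelIncrements

variable {V : Type*} [AddCommGroup V] [Module ℝ V]

theorem exists_eq_smul_add_of_sub_eq_smul_sub (hV : 1 < Module.rank ℝ V) {f : V → V}
    (hf : ∀ q q', q ≠ q' → ∃ s : ℝ, f q - f q' = s • (q - q')) :
    ∃ (a : ℝ) (u : V), ∀ q, f q = a • q + u := by
  have hray : ∀ q, ∃ s : ℝ, f q - f 0 = s • q := fun q => by
    rcases eq_or_ne q 0 with rfl | hq
    · exact ⟨0, by simp⟩
    · simpa using hf q 0 hq
  choose σ hσ using hray
  -- `f q - f r` is parallel to `q - r` and also equals `σ q • q - σ r • r`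
  have key : ∀ q r, LinearIndependent ℝ ![q, r] → σ q = σ r := by
    intro q r hqr
    obtain ⟨k, hk⟩ := hf q r (by simpa using hqr.injective.ne (zero_ne_one : (0 : Fin 2) ≠ 1))
    have hpar : (σ q - k) • q = (σ r - k) • r := by
      linear_combination (norm := module) hσ r - hσ q + hk
    obtain ⟨hq, hr⟩ := hqr.eq_zero_of_pair' hpar
    linarith
  have : Nontrivial V := rank_pos_iff_nontrivial.mp (zero_lt_one.trans hV)
  obtain ⟨e, he⟩ := exists_ne (0 : V)
  obtain ⟨y, hy⟩ := exists_linearIndependent_pair_of_one_lt_rank hV he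
  refine ⟨σ e, f 0, fun q => ?_⟩
  suffices σ q • q = σ e • q by rw [← this, ← hσ q]; abel
  by_cases heq : LinearIndependent ℝ ![e, q]
  · rw [key e q heq]
  obtain ⟨c, rfl⟩ : ∃ c : ℝ, c • e = q := by simpa [LinearIndependent.pair_iff' he] using heq
  rcases eq_or_ne c 0 with rfl | hc
  · simp
  have hyc : LinearIndependent ℝ ![y, c • e] := by
    rw [LinearIndependent.pair_symm_iff]
    simpa using
      (LinearIndependent.pair_smul_smul_iff (isUnit_iff_ne_zero.mpr hc) isUnit_one).mpr hy
  rw [← key y _ hyc, key e y hy]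

theorem exists_forall_eq_smul_add_of_sub_eq_smul_sub {ι : Type*} (hV : 1 < Module.rank ℝ V)
    {w : ι → V → V} (hw : ∀ i j q q', q ≠ q' → ∃ s : ℝ, w i q - w j q' = s • (q - q')) :
    ∃ (a : ℝ) (u : V), ∀ i q, w i q = a • q + u := by
  rcases isEmpty_or_nonempty ι with hι | ⟨⟨i₀⟩⟩
  · exact ⟨0, 0, isEmptyElim⟩
  choose a u hau using fun i => exists_eq_smul_add_of_sub_eq_smul_sub hV (hw i i)
  have : Nontrivial V := rank_pos_iff_nontrivial.mp (zero_lt_one.trans hV)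
  obtain ⟨e, he⟩ := exists_ne (0 : V)
  obtain ⟨y, hy⟩ := exists_linearIndependent_pair_of_one_lt_rank hV he
  have hey : e ≠ y := by simpa using hy.injective.ne (zero_ne_one : (0 : Fin 2) ≠ 1)
  have hy0 : y ≠ 0 := by simpa using hy.ne_zero 1
  have hu : ∀ i j, u i = u j := by
    intro i j
    obtain ⟨s, hs⟩ := hw i j e 0 he
    obtain ⟨t, ht⟩ := hw i j y 0 hy0
    simp only [hau, smul_zero, zero_add, sub_zero] at hs ht
    have hpar : (s - a i) • e = (t - a i) • y := by
      linear_combination (norm := module) ht - hs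
    obtain ⟨hs', -⟩ := hy.eq_zero_of_pair' hpar
    rw [← sub_eq_zero]
    linear_combination (norm := module) hs + hs' • e
  have ha : ∀ i j, a i = a j := by
    intro i j
    obtain ⟨s, hs⟩ := hw i j e y hey
    have hpar : (a i - s) • e = (a j - s) • y := by
      rw [hau, hau, hu i j] at hs
      linear_combination (norm := module) hs
    obtain ⟨hi, hj⟩ := hy.eq_zero_of_pair' hpar
    linarith
  exact ⟨a i₀, u i₀, fun i q => by rw [hau, ha i i₀, hu i i₀]⟩

end ParallelIncrements

section Quadratic

variable {H : Type*} [NormedAddCommGroup H] [InnerProductSpace ℝ H]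

theorem hasGradientAt_quadratic [CompleteSpace H] (a : ℝ) (u : H) (b : ℝ) (x : H) :
    HasGradientAt (fun p => a / 2 * ‖p‖ ^ 2 + ⟪u, p⟫_ℝ + b) (a • x + u) x := by
  rw [hasGradientAt_iff_hasFDerivAt]
  refine ((((hasStrictFDerivAt_norm_sq x).hasFDerivAt.const_mul (a / 2)).add
    (innerSL ℝ u).hasFDerivAt).add_const b).congr_fderiv ?_
  ext y
  simp only [add_apply, smul_apply, innerSL_apply_apply, map_add, map_smul,
    InnerProductSpace.toDual_apply_apply, smul_eq_mul, nsmul_eq_mul]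
  ring

theorem eq_quadratic_of_gradient_eq [CompleteSpace H] {g : H → ℝ} (hg : Differentiable ℝ g)
    {a : ℝ} {u : H} (hgrad : ∀ p, gradient g p = a • p + u) (p : H) :
    g p = a / 2 * ‖p‖ ^ 2 + ⟪u, p⟫_ℝ + g 0 := by
  have hQ := fun x => hasGradientAt_quadratic a u (g 0) x
  refine congrFun (eq_of_fderiv_eq hg (fun x => (hQ x).differentiableAt) (fun x => ?_) 0 ?_) p
  · rw [← toDual_gradient, hgrad, (hQ x).hasFDerivAt.fderiv]
  · simp

theorem neg_of_tendsto_cocompact_exp_quadratic [Nontrivial H] {a b : ℝ} {u : H}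
    (h : Tendsto (fun p => exp (a / 2 * ‖p‖ ^ 2 + ⟪u, p⟫_ℝ + b)) (cocompact H) (𝓝 0)) :
    a < 0 := by
  by_contra! ha
  -- the linear term cancels in `f p * f (-p) = exp (a * ‖p‖ ^ 2 + 2 * b)`
  have hsymm := h.mul (h.comp (Homeomorph.neg H).map_cocompact.le)
  rw [mul_zero] at hsymm
  refine (exp_pos (2 * b)).not_ge (ge_of_tendsto' hsymm fun p => ?_)
  simp only [Function.comp_apply, Homeomorph.coe_neg, norm_neg, inner_neg_right, ← exp_add]
  gcongr
  nlinarith [sq_nonneg ‖p‖]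

end Quadratic

section Schwartz

theorem SchwartzMap.integrable_one_add_norm_pow_mul {D V : Type*} [NormedAddCommGroup D]
    [NormedSpace ℝ D] [MeasurableSpace D] [BorelSpace D] [SecondCountableTopology D]
    [NormedAddCommGroup V] [NormedSpace ℝ V] (μ : Measure D) [μ.HasTemperateGrowth]
    (f : SchwartzMap D V) (k : ℕ) : Integrable (fun x => (1 + ‖x‖) ^ k * ‖f x‖) μ := by
  refine (((f.integrable_pow_mul μ 0).add (f.integrable_pow_mul μ k)).const_mul
    (2 ^ (k - 1))).mono' (by fun_prop) (Eventually.of_forall fun x => ?_)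
  rw [norm_of_nonneg (by positivity)]
  calc (1 + ‖x‖) ^ k * ‖f x‖ ≤ 2 ^ (k - 1) * (1 ^ k + ‖x‖ ^ k) * ‖f x‖ := by
        gcongr; exact add_pow_le zero_le_one (norm_nonneg x) k
    _ = _ := by simp only [Pi.add_apply]; ring

variable {H : Type*} [NormedAddCommGroup H] [InnerProductSpace ℝ H]

theorem SchwartzMap.contDiff_log (f : SchwartzMap H ℝ) (hf : ∀ p, 0 < f p) {n : ℕ∞} :
    ContDiff ℝ n (fun p => log (f p)) :=
  (f.smooth n).log fun p => (hf p).ne'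

theorem SchwartzMap.continuous_gradient_log [CompleteSpace H] (f : SchwartzMap H ℝ)
    (hf : ∀ p, 0 < f p) : Continuous (gradient fun p => log (f p)) :=
  (InnerProductSpace.toDual ℝ H).symm.continuous.comp
    ((f.contDiff_log hf).continuous_fderiv one_ne_zero)

theorem SchwartzMap.neg_of_gradient_log_eq [FiniteDimensional ℝ H] [Nontrivial H]
    (f : SchwartzMap H ℝ) (hf : ∀ p, 0 < f p) {a : ℝ} {u : H}
    (hgrad : ∀ p, gradient (fun q => log (f q)) p = a • p + u) : a < 0 := by
  have hlog := eq_quadratic_of_gradient_eq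
    ((f.contDiff_log hf (n := 1)).differentiable one_ne_zero) hgrad
  refine neg_of_tendsto_cocompact_exp_quadratic (u := u) (b := log (f 0)) ?_
  simpa only [← hlog, exp_log (hf _)] using f.tendsto_cocompact

end Schwartz

section Maxwellian

theorem Maxw_eq_mul (ρ m θ : ℝ) (p : E3) : Maxw ρ m θ p = ρ * Maxw 1 m θ p := by
  simp only [Maxw]
  ring

variable {ρ m θ : ℝ}

theorem Maxw_pos (hρ : 0 < ρ) (hm : 0 < m) (hθ : 0 < θ) (p : E3) : 0 < Maxw ρ m θ p := by
  unfold Maxw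
  positivity

theorem log_Maxw_sub_smul (hρ : 0 < ρ) (hm : 0 < m) (hθ : 0 < θ) (u p : E3) :
    log (Maxw ρ m θ (p - m • u)) =
      -(m * θ)⁻¹ / 2 * ‖p‖ ^ 2 + ⟪θ⁻¹ • u, p⟫_ℝ + log (Maxw ρ m θ (-(m • u))) := by
  have hc : 0 < ρ * (2 * π * m * θ) ^ (-(3 : ℝ) / 2) := by positivity
  simp only [Maxw, log_mul hc.ne' (exp_pos _).ne', log_exp, norm_sub_sq_real, norm_neg,
    norm_smul, real_inner_smul_left, real_inner_smul_right, Real.norm_eq_abs, abs_of_pos hm,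
    real_inner_comm u p]
  field_simp
  ring

theorem hasGradientAt_log_Maxw_sub_smul (hρ : 0 < ρ) (hm : 0 < m) (hθ : 0 < θ) (u p : E3) :
    HasGradientAt (fun q => log (Maxw ρ m θ (q - m • u))) (-(m * θ)⁻¹ • p + θ⁻¹ • u) p := by
  simp only [log_Maxw_sub_smul hρ hm hθ]
  exact hasGradientAt_quadratic _ _ _ p

theorem exists_eq_Maxw_of_gradient_log_eq (hm : 0 < m) (hθ : 0 < θ) {f : E3 → ℝ}
    (hf : ∀ p, 0 < f p) (hdiff : Differentiable ℝ fun p => log (f p)) {u : E3}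
    (hgrad : ∀ p, gradient (fun q => log (f q)) p = -(m * θ)⁻¹ • p + θ⁻¹ • u) :
    ∃ ρ > 0, ∀ p, f p = Maxw ρ m θ (p - m • u) := by
  have hM1 := Maxw_pos one_pos hm hθ (-(m • u))
  -- `ρ` makes the two functions agree at `0`; their logarithms are then the same quadratic
  set ρ := f 0 / Maxw 1 m θ (-(m • u))
  have hρ : 0 < ρ := div_pos (hf 0) hM1
  have hM0 : Maxw ρ m θ (-(m • u)) = f 0 := by rw [Maxw_eq_mul, div_mul_cancel₀ _ hM1.ne']
  refine ⟨ρ, hρ, fun p => ?_⟩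
  rw [← exp_log (hf p), ← exp_log (Maxw_pos hρ hm hθ _), log_Maxw_sub_smul hρ hm hθ, hM0,
    eq_quadratic_of_gradient_eq hdiff hgrad p, neg_div]

theorem exists_Maxw_of_gradient_log_smul_eq {ι : Type*} {mass : ι → ℝ}
    (hmass : ∀ i, 0 < mass i) {F : ι → SchwartzMap E3 ℝ} (hpos : ∀ i p, 0 < F i p) {a : ℝ}
    {u : E3} (hgrad : ∀ i q, gradient (fun p => log (F i p)) (mass i • q) = a • q + u) :
    ∃ (ρ : ι → ℝ) (w : E3) (θ : ℝ), (∀ i, 0 < ρ i) ∧ 0 < θ ∧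
      ∀ i p, F i p = Maxw (ρ i) (mass i) θ (p - mass i • w) := by
  rcases isEmpty_or_nonempty ι with hι | ⟨⟨i₀⟩⟩
  · exact ⟨isEmptyElim, 0, 1, isEmptyElim, one_pos, isEmptyElim⟩
  have hgrad' : ∀ i p, gradient (fun q => log (F i q)) p = (a * (mass i)⁻¹) • p + u := by
    intro i p
    simpa [smul_inv_smul₀ (hmass i).ne', smul_smul] using hgrad i ((mass i)⁻¹ • p)
  have ha : a < 0 := neg_of_mul_neg_left ((F i₀).neg_of_gradient_log_eq (hpos i₀) (hgrad' i₀))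
    (inv_pos.2 (hmass i₀)).le
  have hθ : 0 < -a⁻¹ := neg_pos.2 (inv_lt_zero.2 ha)
  have hM : ∀ i, ∃ ρ > 0, ∀ p, F i p = Maxw ρ (mass i) (-a⁻¹) (p - mass i • (-a⁻¹ • u)) := by
    refine fun i => exists_eq_Maxw_of_gradient_log_eq (hmass i) hθ (hpos i)
      (((F i).contDiff_log (hpos i)).differentiable one_ne_zero) fun p => ?_
    rw [hgrad', smul_smul, inv_mul_cancel₀ hθ.ne', one_smul]
    congr 2
    field_simp
  choose ρ hρ hF using hM
  exact ⟨ρ, -a⁻¹ • u, -a⁻¹, hρ, hθ, hF⟩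

end Maxwellian

section LandauIntegrand

theorem one_add_norm_sub_smul_le {E : Type*} [NormedAddCommGroup E] [NormedSpace ℝ E]
    (m m' : ℝ) (p p' : E) :
    1 + ‖m⁻¹ • p - m'⁻¹ • p'‖ ≤ (1 + |m⁻¹| + |m'⁻¹|) * ((1 + ‖p‖) * (1 + ‖p'‖)) := by
  have h := norm_sub_le (m⁻¹ • p) (m'⁻¹ • p')
  rw [norm_smul, norm_smul, Real.norm_eq_abs, Real.norm_eq_abs] at h
  nlinarith [norm_nonneg p, norm_nonneg p', abs_nonneg m⁻¹, abs_nonneg m'⁻¹,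
    mul_nonneg (norm_nonneg p) (norm_nonneg p'),
    mul_nonneg (mul_nonneg (abs_nonneg m⁻¹) (norm_nonneg p)) (norm_nonneg p'),
    mul_nonneg (mul_nonneg (abs_nonneg m'⁻¹) (norm_nonneg p)) (norm_nonneg p')]

theorem norm_sub_le_of_le_one_add_norm_pow {E F : Type*} [NormedAddCommGroup E]
    [NormedAddCommGroup F] {a b : E → F} {ca cb : ℝ} {ka kb : ℕ}
    (hca : ∀ p, ‖a p‖ ≤ ca * (1 + ‖p‖) ^ ka) (hcb : ∀ p, ‖b p‖ ≤ cb * (1 + ‖p‖) ^ kb)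
    (p p' : E) :
    ‖a p - b p'‖ ≤ (ca + cb) * ((1 + ‖p‖) * (1 + ‖p'‖)) ^ (ka + kb) := by
  have hca0 : 0 ≤ ca := by simpa using (norm_nonneg _).trans (hca 0)
  have hcb0 : 0 ≤ cb := by simpa using (norm_nonneg _).trans (hcb 0)
  have h1 : 1 ≤ 1 + ‖p‖ := le_add_of_nonneg_right (norm_nonneg p)
  have h1' : 1 ≤ 1 + ‖p'‖ := le_add_of_nonneg_right (norm_nonneg p')
  have hP : 1 ≤ (1 + ‖p‖) * (1 + ‖p'‖) := one_le_mul_of_one_le_of_one_le h1 h1'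
  calc ‖a p - b p'‖ ≤ ca * (1 + ‖p‖) ^ ka + cb * (1 + ‖p'‖) ^ kb :=
        (norm_sub_le _ _).trans (add_le_add (hca p) (hcb p'))
    _ ≤ _ := by
        rw [add_mul]
        gcongr
        · exact (pow_le_pow_left₀ (by positivity)
            (le_mul_of_one_le_right (by positivity) h1') ka).trans
              (pow_le_pow_right₀ hP (Nat.le_add_right _ _))
        · exact (pow_le_pow_left₀ (by positivity)
            (le_mul_of_one_le_left (by positivity) h1) kb).trans
              (pow_le_pow_right₀ hP (Nat.le_add_left _ _))

def landauIntegrand (c γ m m' : ℝ) (f g : E3 → ℝ) (a b : E3 → E3) (x : E3 × E3) : ℝ :=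
  f x.1 * g x.2 * ⟪a x.1 - b x.2, Aapp c γ (m⁻¹ • x.1 - m'⁻¹ • x.2) (a x.1 - b x.2)⟫_ℝ

variable {c γ m m' : ℝ} {f g : E3 → ℝ} {a b : E3 → E3}

theorem landauIntegrand_nonneg (hc : 0 ≤ c) (hf : ∀ p, 0 ≤ f p) (hg : ∀ p, 0 ≤ g p) :
    0 ≤ landauIntegrand c γ m m' f g a b := fun _ =>
  mul_nonneg (mul_nonneg (hf _) (hg _)) (inner_Aapp_self_nonneg _ _ hc)

theorem landauIntegrand_eq_zero_of_sub_eq_smul {p p' : E3} {s : ℝ}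
    (h : a p - b p' = s • (m⁻¹ • p - m'⁻¹ • p')) :
    landauIntegrand c γ m m' f g a b (p, p') = 0 := by
  rw [landauIntegrand, h, inner_Aapp_smul_self_eq_zero, mul_zero]

theorem measurable_landauIntegrand (hf : Measurable f) (hg : Measurable g) (ha : Measurable a)
    (hb : Measurable b) : Measurable (landauIntegrand c γ m m' f g a b) := by
  unfold landauIntegrand Aapp
  fun_prop

theorem continuousOn_landauIntegrand (hf : Continuous f) (hg : Continuous g)
    (ha : Continuous a) (hb : Continuous b) :
    ContinuousOn (landauIntegrand c γ m m' f g a b) {x | m⁻¹ • x.1 - m'⁻¹ • x.2 ≠ 0} := by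
  have hd : Continuous fun x : E3 × E3 => a x.1 - b x.2 := by fun_prop
  have hA := (continuousOn_Aapp (c := c) (γ := γ)).comp
    (((continuous_fst.const_smul m⁻¹).sub (continuous_snd.const_smul m'⁻¹)).prodMk
      hd).continuousOn (fun x hx => hx)
  unfold landauIntegrand
  exact ((hf.comp continuous_fst).mul (hg.comp continuous_snd)).continuousOn.mul
    (hd.continuousOn.inner hA)

theorem integrable_landauIntegrand (hc : 0 ≤ c) (hγ : γ ∈ Set.Icc (-2 : ℝ) 1)
    (f g : SchwartzMap E3 ℝ) (ha : Continuous a) (hb : Continuous b) {ca cb : ℝ} {ka kb : ℕ}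
    (hca : ∀ p, ‖a p‖ ≤ ca * (1 + ‖p‖) ^ ka) (hcb : ∀ p, ‖b p‖ ≤ cb * (1 + ‖p‖) ^ kb) :
    Integrable (landauIntegrand c γ m m' f g a b) (volume.prod volume) := by
  refine (((f.integrable_one_add_norm_pow_mul volume (3 + 2 * (ka + kb))).mul_prod
    (g.integrable_one_add_norm_pow_mul volume (3 + 2 * (ka + kb)))).const_mul
      (c * (1 + |m⁻¹| + |m'⁻¹|) ^ 3 * (ca + cb) ^ 2)).mono'
    (measurable_landauIntegrand f.continuous.measurable g.continuous.measurable
      ha.measurable hb.measurable).aestronglyMeasurable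
    (Eventually.of_forall fun (p, p') => ?_)
  rw [landauIntegrand, norm_mul, norm_mul, Real.norm_of_nonneg (inner_Aapp_self_nonneg _ _ hc)]
  calc ‖f p‖ * ‖g p'‖ * ⟪a p - b p', Aapp c γ (m⁻¹ • p - m'⁻¹ • p') (a p - b p')⟫_ℝ
      ≤ ‖f p‖ * ‖g p'‖ * (c * ((1 + |m⁻¹| + |m'⁻¹|) * ((1 + ‖p‖) * (1 + ‖p'‖))) ^ 3 *
          ((ca + cb) * ((1 + ‖p‖) * (1 + ‖p'‖)) ^ (ka + kb)) ^ 2) := by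
        refine mul_le_mul_of_nonneg_left ((inner_Aapp_self_le _ _ hc hγ).trans ?_)
          (by positivity)
        gcongr
        exacts [one_add_norm_sub_smul_le m m' p p',
          norm_sub_le_of_le_one_add_norm_pow hca hcb p p']
    _ = c * (1 + |m⁻¹| + |m'⁻¹|) ^ 3 * (ca + cb) ^ 2 *
          (((1 + ‖p‖) * (1 + ‖p'‖)) ^ (3 + 2 * (ka + kb)) * (‖f p‖ * ‖g p'‖)) := by ring
    _ = _ := by rw [mul_pow]; ring

theorem exists_sub_eq_smul_of_integral_landauIntegrand_eq_zero (hc : 0 < c)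
    (hf : Continuous f) (hg : Continuous g) (hf0 : ∀ p, 0 < f p) (hg0 : ∀ p, 0 < g p)
    (ha : Continuous a) (hb : Continuous b)
    (hint : Integrable (landauIntegrand c γ m m' f g a b) (volume.prod volume))
    (h0 : ∫ p, ∫ p', landauIntegrand c γ m m' f g a b (p, p') = 0) {p p' : E3}
    (hz : m⁻¹ • p - m'⁻¹ • p' ≠ 0) :
    ∃ s : ℝ, a p - b p' = s • (m⁻¹ • p - m'⁻¹ • p') := by
  have hX0 : 0 ≤ landauIntegrand c γ m m' f g a b :=
    landauIntegrand_nonneg hc.le (fun p => (hf0 p).le) (fun p => (hg0 p).le)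
  rw [← integral_prod _ hint] at h0
  have hae := (integral_eq_zero_iff_of_nonneg hX0 hint).mp h0
  have hU : IsOpen {x : E3 × E3 | m⁻¹ • x.1 - m'⁻¹ • x.2 ≠ 0} :=
    isOpen_ne_fun (by fun_prop) continuous_const
  have hX := Measure.eqOn_open_of_ae_eq (ae_restrict_of_ae hae) hU
    (continuousOn_landauIntegrand hf hg ha hb) continuousOn_const (show (p, p') ∈ _ from hz)
  simp only [landauIntegrand, Pi.zero_apply, mul_eq_zero, (hf0 p).ne', (hg0 p').ne',
    false_or] at hX
  exact exists_eq_smul_of_inner_Aapp_self_eq_zero _ _ hc hz hX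

end LandauIntegrand

section EntropyProduction

variable {mass : Fin N → ℝ} {C : Fin N → Fin N → ℝ} {γ : ℝ}

theorem entProd_eq_sum_integral_landauIntegrand (F : Fin N → E3 → ℝ) :
    entProd mass C γ F = 1 / 2 * ∑ i, ∑ j, ∫ p, ∫ p',
      landauIntegrand (C i j) γ (mass i) (mass j) (F i) (F j)
        (gradient fun q => log (F i q)) (gradient fun q => log (F j q)) (p, p') :=
  rfl

theorem integral_landauIntegrand_eq_zero_of_entProd_eq_zero {F : Fin N → E3 → ℝ}
    (hC : ∀ i j, 0 ≤ C i j) (hF : ∀ i p, 0 ≤ F i p) (h : entProd mass C γ F = 0)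
    (i j : Fin N) :
    ∫ p, ∫ p', landauIntegrand (C i j) γ (mass i) (mass j) (F i) (F j)
      (gradient fun q => log (F i q)) (gradient fun q => log (F j q)) (p, p') = 0 := by
  have hnonneg : ∀ i j, 0 ≤ ∫ p, ∫ p', landauIntegrand (C i j) γ (mass i) (mass j) (F i) (F j)
      (gradient fun q => log (F i q)) (gradient fun q => log (F j q)) (p, p') :=
    fun i j => integral_nonneg fun p => integral_nonneg fun p' =>
      landauIntegrand_nonneg (hC i j) (hF i) (hF j) _
  rw [entProd_eq_sum_integral_landauIntegrand, mul_eq_zero, or_iff_right (by norm_num),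
    Finset.sum_eq_zero_iff_of_nonneg fun i _ => Finset.sum_nonneg fun j _ => hnonneg i j] at h
  exact (Finset.sum_eq_zero_iff_of_nonneg fun j _ => hnonneg i j).mp (h i (mem_univ i)) j
    (mem_univ j)

theorem exists_sub_eq_smul_of_entProd_eq_zero (hC : ∀ i j, 0 < C i j)
    (hγ : γ ∈ Set.Icc (-2 : ℝ) 1) {F : Fin N → SchwartzMap E3 ℝ} (hpos : ∀ i p, 0 < F i p)
    (hgrowth : ∀ i, ∃ (c : ℝ) (k : ℕ), ∀ p : E3,
      ‖gradient (fun q => log (F i q)) p‖ ≤ c * (1 + ‖p‖) ^ k)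
    (h : entProd mass C γ (fun i => ⇑(F i)) = 0) (i j : Fin N) {p p' : E3}
    (hz : (mass i)⁻¹ • p - (mass j)⁻¹ • p' ≠ 0) :
    ∃ s : ℝ, gradient (fun q => log (F i q)) p - gradient (fun q => log (F j q)) p' =
      s • ((mass i)⁻¹ • p - (mass j)⁻¹ • p') := by
  obtain ⟨ci, ki, hci⟩ := hgrowth i
  obtain ⟨cj, kj, hcj⟩ := hgrowth j
  have hvi := (F i).continuous_gradient_log (hpos i)
  have hvj := (F j).continuous_gradient_log (hpos j)
  exact exists_sub_eq_smul_of_integral_landauIntegrand_eq_zero (hC i j) (F i).continuous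
    (F j).continuous (hpos i) (hpos j) hvi hvj
    (integrable_landauIntegrand (hC i j).le hγ (F i) (F j) hvi hvj hci hcj)
    (integral_landauIntegrand_eq_zero_of_entProd_eq_zero (fun i j => (hC i j).le)
      (fun i p => (hpos i p).le) h i j) hz

theorem entProd_eq_zero_of_sub_eq_smul {F : Fin N → E3 → ℝ}
    (h : ∀ i j p p', ∃ s : ℝ, gradient (fun q => log (F i q)) p -
      gradient (fun q => log (F j q)) p' = s • ((mass i)⁻¹ • p - (mass j)⁻¹ • p')) :
    entProd mass C γ F = 0 := by
  have hzero : ∀ i j p p', landauIntegrand (C i j) γ (mass i) (mass j) (F i) (F j)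
      (gradient fun q => log (F i q)) (gradient fun q => log (F j q)) (p, p') = 0 :=
    fun i j p p' => (h i j p p').elim fun _ hs => landauIntegrand_eq_zero_of_sub_eq_smul hs
  simp [entProd_eq_sum_integral_landauIntegrand, hzero]

end EntropyProduction

theorem entropy_production_eq_zero_iff_general (N : ℕ)
    (mass : Fin N → ℝ) (hmass : ∀ i, 0 < mass i)
    (C : Fin N → Fin N → ℝ) (hC : ∀ i j, 0 < C i j)
    (γ : ℝ) (hγ : γ ∈ Set.Icc (-2 : ℝ) 1)
    (F : Fin N → SchwartzMap E3 ℝ) (hpos : ∀ i p, 0 < F i p)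
    (hgrowth : ∀ i, ∃ (c : ℝ) (k : ℕ), ∀ p : E3,
      ‖gradient (fun q => Real.log (F i q)) p‖ ≤ c * (1 + ‖p‖) ^ k) :
    entProd mass C γ (fun i => ⇑(F i)) = 0 ↔
      ∃ (ρt : Fin N → ℝ) (u : E3) (θ : ℝ), (∀ i, 0 < ρt i) ∧ 0 < θ ∧
        ∀ i p, F i p = ρt i * (2 * π * mass i * θ) ^ (-(3 : ℝ) / 2) *
          Real.exp (-‖p - mass i • u‖ ^ (2 : ℕ) / (2 * mass i * θ)) := by
  constructor
  · intro h
    have hcancel : ∀ i (q : E3), (mass i)⁻¹ • (mass i • q) = q :=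
      fun i => inv_smul_smul₀ (hmass i).ne'
    have hpar : ∀ i j (q q' : E3), q ≠ q' → ∃ s : ℝ, gradient (fun p => log (F i p)) (mass i • q) -
        gradient (fun p => log (F j p)) (mass j • q') = s • (q - q') := fun i j q q' hqq' => by
      simpa only [hcancel] using exists_sub_eq_smul_of_entProd_eq_zero hC hγ hpos hgrowth h i j
        (p := mass i • q) (p' := mass j • q') (by simpa only [hcancel] using sub_ne_zero.2 hqq')
    obtain ⟨a, u, hau⟩ := exists_forall_eq_smul_add_of_sub_eq_smul_sub
      (Module.one_lt_rank_of_one_lt_finrank (by simp)) hpar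
    exact exists_Maxw_of_gradient_log_smul_eq hmass hpos hau
  · rintro ⟨ρ, u, θ, hρ, hθ, hF⟩
    have hgrad : ∀ i p, gradient (fun q => log (F i q)) p = -(mass i * θ)⁻¹ • p + θ⁻¹ • u := by
      intro i p
      have hFM : ⇑(F i) = fun q => Maxw (ρ i) (mass i) θ (q - mass i • u) := funext (hF i)
      simpa only [hFM] using (hasGradientAt_log_Maxw_sub_smul (hρ i) (hmass i) hθ u p).gradient
    refine entProd_eq_zero_of_sub_eq_smul fun i j p p' => ⟨-θ⁻¹, ?_⟩
    rw [hgrad, hgrad, mul_inv, mul_inv]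
    module

/-- vanishing of the entropy production characterizes Maxwellians with
common velocity and temperature. -/
theorem entropy_production_eq_zero_iff (N : ℕ) (hN : 2 ≤ N)
    (mass : Fin N → ℝ) (hmass : ∀ i, 0 < mass i)
    (C : Fin N → Fin N → ℝ) (hC : ∀ i j, 0 < C i j) (hCsymm : ∀ i j, C i j = C j i)
    (γ : ℝ) (hγ : γ ∈ Set.Icc (-2 : ℝ) 1)
    (F : Fin N → SchwartzMap E3 ℝ) (hpos : ∀ i p, 0 < F i p)
    (hgrowth : ∀ i, ∃ (c : ℝ) (k : ℕ), ∀ p : E3,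
      ‖gradient (fun q => Real.log (F i q)) p‖ ≤ c * (1 + ‖p‖) ^ k) :
    entProd mass C γ (fun i => ⇑(F i)) = 0 ↔
      ∃ (ρt : Fin N → ℝ) (u : E3) (θ : ℝ), (∀ i, 0 < ρt i) ∧ 0 < θ ∧
        ∀ i p, F i p = ρt i * (2 * π * mass i * θ) ^ (-(3 : ℝ) / 2) *
          Real.exp (-‖p - mass i • u‖ ^ (2 : ℕ) / (2 * mass i * θ)) :=
  entropy_production_eq_zero_iff_general N mass hmass C hC γ hγ F hpos hgrowth
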